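/- Let L > 1, α > 0, C₁, C₂ > 0, z ∈ ℂ, and let N ≥ 1 be an integer. Let G, g : Λ × Λ → ℂ be measurable with |G(x,y)| ≤ C₁ e^{−α|x−y|} and |g(y,x')| ≤ C₂ e^{−α|y−x'|} for all (x,y), (y,x') ∈ Λ × Λ. Define r_N(x,x') := −z ∫_Λ ((i · fl(x,y,x'))^N / N!) · G(x,y) · g(y,x') dy. Then there exists a constant C₃ > 0 depending only on α, C₁, C₂, |z| and N (in particular independent of L) such that |r_N(x,x')| ≤ C₃ e^{−(α/4)|x−x'|} for all x, x' ∈ Λ. -/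

import Mathlib

open MeasureTheory Real

noncomputable section

/-- The open cube `Λ = (−L/2, L/2)³ ⊂ ℝ³`. -/
def cube (L : ℝ) : Set (EuclideanSpace ℝ (Fin 3)) :=
  {x | ∀ i, x i ∈ Set.Ioo (-(L / 2)) (L / 2)}

/-- The magnetic phase `φ(x,x') = (x₂x₁' − x₁x₂')/2`. -/
def phi (x x' : EuclideanSpace ℝ (Fin 3)) : ℝ := (x 1 * x' 0 - x 0 * x' 1) / 2

/-- The magnetic flux through the triangle with vertices `x`, `y`, `x'`. -/
def fl (x y x' : EuclideanSpace ℝ (Fin 3)) : ℝ := phi x y + phi y x' + phi x' x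

/-!
Up to sign, `2 fl(x,y,x')` is the third component of `(x - y) × (y - x')`, so
`|fl(x,y,x')| ≤ |x - y| |y - x'|`. With `a = |x - y|`, `b = |y - x'|` this turns the integrand into
`|fl|^N/N! · e^{-α(a+b)} ≤ (a+b)^{2N}/N! · e^{-α(a+b)}`, and `s^{2N} ≤ (2N)! (2/α)^{2N} e^{αs/2}`
leaves `e^{-α(a+b)/2}`. By the triangle inequality `a + b ≥ |x - x'|`, half of this decay gives
`e^{-(α/4)|x - x'|}` and the other half the integrable weight `e^{-(α/4)|x - y|}`, whose integral
over all of `ℝ³` does not depend on `L`.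
-/

open Nat

lemma measurableSet_cube (L : ℝ) : MeasurableSet (cube L) := by
  have : cube L =
      ⋂ i, (fun x : EuclideanSpace ℝ (Fin 3) => x i) ⁻¹' Set.Ioo (-(L / 2)) (L / 2) := by
    ext x; simp [cube]
  rw [this]
  exact MeasurableSet.iInter fun i => measurableSet_Ioo.preimage (by fun_prop)

lemma abs_fl_le (x y x' : EuclideanSpace ℝ (Fin 3)) : |fl x y x'| ≤ ‖x - y‖ * ‖y - x'‖ := by
  set a := x - y
  set b := y - x'
  have hfl : fl x y x' = (a 1 * b 0 - a 0 * b 1) / 2 := by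
    simp only [a, b, fl, phi, PiLp.sub_apply]; ring
  have hab : ∀ i j, |a i * b j| ≤ ‖a‖ * ‖b‖ := fun i j => by
    rw [abs_mul, ← Real.norm_eq_abs, ← Real.norm_eq_abs]
    exact mul_le_mul (PiLp.norm_apply_le a i) (PiLp.norm_apply_le b j) (norm_nonneg _)
      (norm_nonneg _)
  rw [hfl, abs_div, abs_two, div_le_iff₀ two_pos]
  linarith [abs_sub (a 1 * b 0) (a 0 * b 1), hab 1 0, hab 0 1]

lemma pow_le_factorial_div_mul_exp {s c : ℝ} (hs : 0 ≤ s) (hc : 0 < c) (n : ℕ) :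
    s ^ n ≤ n ! / c ^ n * exp (c * s) := by
  have h := pow_div_factorial_le_exp (c * s) (mul_nonneg hc.le hs) n
  rw [div_le_iff₀ (by positivity), mul_pow] at h
  rw [div_mul_eq_mul_div, le_div_iff₀ (by positivity)]
  linarith

lemma pow_div_factorial_mul_exp_le {α a b f : ℝ} (hα : 0 < α) (ha : 0 ≤ a) (hb : 0 ≤ b)
    (hf : |f| ≤ a * b) (N : ℕ) :
    |f| ^ N / N ! * exp (-α * (a + b)) ≤
      (2 * N)! / (N ! * (α / 2) ^ (2 * N)) * exp (-(α / 2) * (a + b)) := by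
  have hpow : |f| ^ N ≤ (2 * N)! / (α / 2) ^ (2 * N) * exp (α / 2 * (a + b)) :=
    calc |f| ^ N ≤ ((a + b) ^ 2) ^ N :=
          pow_le_pow_left₀ (abs_nonneg f) (hf.trans (by nlinarith)) N
      _ = (a + b) ^ (2 * N) := (pow_mul _ _ _).symm
      _ ≤ _ := pow_le_factorial_div_mul_exp (by positivity) (by positivity) _
  calc |f| ^ N / N ! * exp (-α * (a + b))
      ≤ (2 * N)! / (α / 2) ^ (2 * N) * exp (α / 2 * (a + b)) / N ! * exp (-α * (a + b)) := by
        gcongr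
    _ = (2 * N)! / (N ! * (α / 2) ^ (2 * N)) * exp (α / 2 * (a + b) + -α * (a + b)) := by
        rw [exp_add]; field_simp
    _ = _ := by ring_nf

lemma norm_flux_integrand_le {α C₁ C₂ : ℝ} (hα : 0 < α) (hC₁ : 0 ≤ C₁) (hC₂ : 0 ≤ C₂) (N : ℕ)
    {x y x' : EuclideanSpace ℝ (Fin 3)} {u v : ℂ} (hu : ‖u‖ ≤ C₁ * exp (-α * ‖x - y‖))
    (hv : ‖v‖ ≤ C₂ * exp (-α * ‖y - x'‖)) :
    ‖(Complex.I * (fl x y x' : ℝ)) ^ N / (N ! : ℂ) * u * v‖ ≤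
      C₁ * C₂ * ((2 * N)! / (N ! * (α / 2) ^ (2 * N))) * exp (-(α / 4) * ‖x - x'‖) *
        exp (-(α / 4) * ‖x - y‖) := by
  set a := ‖x - y‖
  set b := ‖y - x'‖
  have htri : ‖x - x'‖ ≤ a + b := norm_sub_le_norm_sub_add_norm_sub x y x'
  have hnorm : ‖(Complex.I * (fl x y x' : ℝ)) ^ N / (N ! : ℂ) * u * v‖ =
      |fl x y x'| ^ N / N ! * (‖u‖ * ‖v‖) := by
    rw [norm_mul, norm_mul, norm_div, norm_pow, norm_mul, Complex.norm_I, Complex.norm_real,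
      Complex.norm_natCast, one_mul, Real.norm_eq_abs, mul_assoc]
  have hsplit : exp (-(α / 2) * (a + b)) ≤ exp (-(α / 4) * ‖x - x'‖) * exp (-(α / 4) * a) := by
    rw [← exp_add]
    gcongr
    nlinarith [norm_nonneg (x - y), norm_nonneg (y - x')]
  rw [hnorm]
  calc |fl x y x'| ^ N / N ! * (‖u‖ * ‖v‖)
      ≤ |fl x y x'| ^ N / N ! * (C₁ * exp (-α * a) * (C₂ * exp (-α * b))) := by
        gcongr
    _ = C₁ * C₂ * (|fl x y x'| ^ N / N ! * exp (-α * (a + b))) := by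
        rw [mul_add, exp_add]; ring
    _ ≤ C₁ * C₂ * ((2 * N)! / (N ! * (α / 2) ^ (2 * N)) * exp (-(α / 2) * (a + b))) :=
        mul_le_mul_of_nonneg_left
          (pow_div_factorial_mul_exp_le hα (norm_nonneg _) (norm_nonneg _) (abs_fl_le x y x') N)
          (by positivity)
    _ ≤ C₁ * C₂ * ((2 * N)! / (N ! * (α / 2) ^ (2 * N)) *
          (exp (-(α / 4) * ‖x - x'‖) * exp (-(α / 4) * a))) := by gcongr
    _ = _ := by ring

section ExponentialDecay

variable {E : Type*} [NormedAddCommGroup E] [NormedSpace ℝ E] [FiniteDimensional ℝ E]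
  [MeasurableSpace E] [BorelSpace E] {μ : Measure E} [μ.IsAddHaarMeasure]

lemma integrable_exp_neg_mul_norm {c : ℝ} (hc : 0 < c) :
    Integrable (fun w : E => exp (-c * ‖w‖)) μ := by
  set n := Module.finrank ℝ E + 1
  have hint : Integrable (fun w : E => n ! * exp c / c ^ n * (1 + ‖w‖) ^ (-(n : ℝ))) μ :=
    (integrable_one_add_norm (by simp [n])).const_mul _
  refine hint.mono' (by fun_prop) (Filter.Eventually.of_forall fun w => ?_)
  have hpos : 0 < (1 + ‖w‖) ^ n := by positivity
  have hpow := pow_le_factorial_div_mul_exp (by positivity : 0 ≤ 1 + ‖w‖) hc n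
  rw [Real.norm_of_nonneg (exp_pos _).le, rpow_neg (by positivity), rpow_natCast,
    ← div_eq_mul_inv, le_div_iff₀ hpos]
  calc exp (-c * ‖w‖) * (1 + ‖w‖) ^ n
      ≤ exp (-c * ‖w‖) * (n ! / c ^ n * exp (c * (1 + ‖w‖))) := by gcongr
    _ = n ! * exp c / c ^ n := by
        rw [mul_add, exp_add, mul_one]
        field_simp
        rw [← exp_add, neg_add_cancel, exp_zero]

lemma norm_setIntegral_le_mul_integral_exp_neg_norm {F : Type*} [NormedAddCommGroup F]
    [NormedSpace ℝ F] {s : Set E} (hs : MeasurableSet s) {f : E → F} {C c : ℝ} (hC : 0 ≤ C)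
    (hc : 0 < c) (x : E) (hf : ∀ y ∈ s, ‖f y‖ ≤ C * exp (-c * ‖x - y‖)) :
    ‖∫ y in s, f y ∂μ‖ ≤ C * ∫ w, exp (-c * ‖w‖) ∂μ := by
  have hint : Integrable (fun y => exp (-c * ‖x - y‖)) μ :=
    (integrable_exp_neg_mul_norm hc).comp_sub_left x
  calc ‖∫ y in s, f y ∂μ‖
      ≤ ∫ y in s, C * exp (-c * ‖x - y‖) ∂μ :=
        norm_integral_le_of_norm_le (hint.const_mul C).restrict
          (ae_restrict_of_forall_mem hs hf)
    _ ≤ ∫ y, C * exp (-c * ‖x - y‖) ∂μ :=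
        setIntegral_le_integral (hint.const_mul C)
          (Filter.Eventually.of_forall fun y => by positivity)
    _ = C * ∫ w, exp (-c * ‖w‖) ∂μ := by
        rw [integral_const_mul, integral_sub_left_eq_self (fun w => exp (-c * ‖w‖)) μ x]

end ExponentialDecay

theorem rN_kernel_bound_general (α C₁ C₂ : ℝ) (hα : 0 < α) (hC₁ : 0 < C₁) (hC₂ : 0 < C₂)
    (z : ℂ) (N : ℕ) :
    ∃ C₃ : ℝ, 0 < C₃ ∧ ∀ L : ℝ, 1 < L →
      ∀ G g : EuclideanSpace ℝ (Fin 3) → EuclideanSpace ℝ (Fin 3) → ℂ,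
        Measurable (Function.uncurry G) → Measurable (Function.uncurry g) →
        (∀ x ∈ cube L, ∀ y ∈ cube L, ‖G x y‖ ≤ C₁ * Real.exp (-α * ‖x - y‖)) →
        (∀ y ∈ cube L, ∀ x' ∈ cube L, ‖g y x'‖ ≤ C₂ * Real.exp (-α * ‖y - x'‖)) →
        ∀ x ∈ cube L, ∀ x' ∈ cube L,
          ‖-z * ∫ y in cube L,
              (Complex.I * (fl x y x' : ℝ)) ^ N / (N.factorial : ℂ) *
                G x y * g y x'‖ ≤ C₃ * Real.exp (-(α / 4) * ‖x - x'‖) := by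
  set K := C₁ * C₂ * ((2 * N)! / (N ! * (α / 2) ^ (2 * N)))
  set I := ∫ w : EuclideanSpace ℝ (Fin 3), exp (-(α / 4) * ‖w‖)
  refine ⟨‖z‖ * K * I + 1, by positivity, ?_⟩
  intro L _ G g _ _ hG hg x hx x' hx'
  set D := exp (-(α / 4) * ‖x - x'‖)
  have hr : ‖∫ y in cube L, (Complex.I * (fl x y x' : ℝ)) ^ N / (N ! : ℂ) * G x y * g y x'‖ ≤
      K * D * I :=
    norm_setIntegral_le_mul_integral_exp_neg_norm (measurableSet_cube L) (by positivity)
      (by positivity) x fun y hy =>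
        norm_flux_integrand_le hα hC₁.le hC₂.le N (hG x hx y hy) (hg y hy x' hx')
  rw [norm_mul, norm_neg]
  calc ‖z‖ * ‖∫ y in cube L, (Complex.I * (fl x y x' : ℝ)) ^ N / (N ! : ℂ) * G x y * g y x'‖
      ≤ ‖z‖ * (K * D * I) := by gcongr
    _ ≤ (‖z‖ * K * I + 1) * D := by nlinarith [exp_pos (-(α / 4) * ‖x - x'‖)]

/-- If `|G(x,y)| ≤ C₁e^{−α|x−y|}` and `|g(y,x')| ≤ C₂e^{−α|y−x'|}` on `Λ × Λ`, then
the kernel `r_N(x,x') = −z ∫_Λ ((i fl(x,y,x'))^N/N!) G(x,y) g(y,x') dy` satisfies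
`|r_N(x,x')| ≤ C₃ e^{−(α/4)|x−x'|}` with `C₃` depending only on `α, C₁, C₂, |z|, N`
(in particular independent of `L`). -/
theorem rN_kernel_bound (α C₁ C₂ : ℝ) (hα : 0 < α) (hC₁ : 0 < C₁) (hC₂ : 0 < C₂)
    (z : ℂ) (N : ℕ) (hN : 1 ≤ N) :
    ∃ C₃ : ℝ, 0 < C₃ ∧ ∀ L : ℝ, 1 < L →
      ∀ G g : EuclideanSpace ℝ (Fin 3) → EuclideanSpace ℝ (Fin 3) → ℂ,
        Measurable (Function.uncurry G) → Measurable (Function.uncurry g) →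
        (∀ x ∈ cube L, ∀ y ∈ cube L, ‖G x y‖ ≤ C₁ * Real.exp (-α * ‖x - y‖)) →
        (∀ y ∈ cube L, ∀ x' ∈ cube L, ‖g y x'‖ ≤ C₂ * Real.exp (-α * ‖y - x'‖)) →
        ∀ x ∈ cube L, ∀ x' ∈ cube L,
          ‖-z * ∫ y in cube L,
              (Complex.I * (fl x y x' : ℝ)) ^ N / (N.factorial : ℂ) *
                G x y * g y x'‖ ≤ C₃ * Real.exp (-(α / 4) * ‖x - x'‖) :=
  rN_kernel_bound_general α C₁ C₂ hα hC₁ hC₂ z N
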